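/- arXiv:2411.05700 — 6 statements merged into one kernel-verified Lean document; each statement's English description precedes it below -/
import Mathlib

section
/- Let G = P ⋊ K with P, K finite of coprime orders, and suppose K acts faithfully on P (equivalently C_G(P) = Z(P)). If φ is an automorphism of G whose restriction to P is the identity, then φ equals conjugation by some element w ∈ Z(P). -/
/-!
The centralizer `C = C_G(P)` is normal and meets `K` trivially, so `|C|` divides `|P|`; its image
in `G/P ≅ K` then has order dividing both `|P|` and `|K|`, hence `C ≤ P` and `C = Z(P)`.
Since `φ` fixes `P`, the map `k ↦ φ(k) k⁻¹` takes values in `Z(P)` and is a 1-cocycle of `K`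
acting by conjugation. As `|Z(P)|` is prime to `|K|`, averaging shows it is a coboundary, i.e.
`φ` agrees on `K` with conjugation by some `w ∈ Z(P)`; both maps fix `P`, so they agree on
`PK = G`.
-/

open groupCohomology

theorem groupCohomology.isMulCoboundary₁_of_isMulCocycle₁_of_coprime {G M : Type*} [Group G]
    [Finite G] [CommGroup M] [MulDistribMulAction G M] (hco : (Nat.card M).Coprime (Nat.card G))
    {f : G → M} (hf : IsMulCocycle₁ f) : IsMulCoboundary₁ f := by
  have := Fintype.ofFinite G
  set S := ∏ g, f g
  have hS : ∀ h, S = h • S * f h ^ Nat.card G := fun h => calc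
    S = ∏ g, f (h * g) := (Equiv.prod_comp (Equiv.mulLeft h) f).symm
    _ = ∏ g, h • f g * f h := by simp_rw [hf h]
    _ = h • S * f h ^ Nat.card G := by
      rw [Finset.prod_mul_distrib, Finset.smul_prod', Finset.prod_const, Finset.card_univ,
        Nat.card_eq_fintype_card]
  -- a `|G|`-th root of `S⁻¹` trivializes `f`
  obtain ⟨x, hx⟩ := hco.pow_left_bijective.surjective S⁻¹
  refine ⟨x, fun h => hco.pow_left_bijective.injective ?_⟩
  simp only [div_pow, ← smul_pow', hx]
  rw [smul_inv', div_inv_eq_mul, inv_mul_eq_iff_eq_mul]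
  exact hS h

theorem Subgroup.le_of_card_dvd_of_coprime_index {G : Type*} [Group G] {N H : Subgroup G}
    [N.Normal] (hN : (Nat.card N).Coprime N.index) (hH : Nat.card H ∣ Nat.card N) : H ≤ N := by
  intro h hh
  have hdvd : orderOf (h : G ⧸ N) ∣ Nat.card N :=
    (orderOf_map_dvd (QuotientGroup.mk' N) h).trans ((H.orderOf_dvd_natCard hh).trans hH)
  rw [← QuotientGroup.eq_one_iff, ← orderOf_eq_one_iff]
  exact Nat.eq_one_of_dvd_coprimes hN hdvd (_root_.orderOf_dvd_natCard _)

theorem Subgroup.card_dvd_of_disjoint {G : Type*} [Group G] [Finite G] {N H K : Subgroup G}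
    [H.Normal] (hNK : Nat.card N * Nat.card K = Nat.card G) (hHK : Disjoint H K) :
    Nat.card H ∣ Nat.card N := by
  have hK : Nat.card K ∣ H.index := by
    refine Subgroup.card_dvd_of_injective ((QuotientGroup.mk' H).comp K.subtype) ?_
    rw [← MonoidHom.ker_eq_bot_iff, eq_bot_iff]
    intro k hk
    have hkH : (k : G) ∈ H := (QuotientGroup.eq_one_iff _).mp hk
    exact Subtype.ext (hHK.le_bot ⟨hkH, k.2⟩)
  refine Nat.dvd_of_mul_dvd_mul_right (Nat.card_pos (α := K)) ?_
  rw [hNK, ← H.card_mul_index]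
  exact mul_dvd_mul_left _ hK

open scoped IsMulCommutative in
theorem Subgroup.exists_conj_eq_of_mul_inv_mem_of_coprime {G : Type*} [Group G]
    {A K : Subgroup G} [A.Normal] [IsMulCommutative A] [Finite K]
    (hco : (Nat.card A).Coprime (Nat.card K)) (φ : K →* G)
    (hφ : ∀ k : K, φ k * (k : G)⁻¹ ∈ A) :
    ∃ w ∈ A, ∀ k : K, φ k = w * k * w⁻¹ := by
  let : MulDistribMulAction K A :=
    MulDistribMulAction.compHom A (ConjAct.toConjAct.toMonoidHom.comp K.subtype)
  have hsmul : ∀ (k : K) (a : A), ((k • a : A) : G) = k * a * (k : G)⁻¹ := fun _ _ => rfl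
  let f : K → A := fun k => ⟨φ k * (k : G)⁻¹, hφ k⟩
  have hf : IsMulCocycle₁ f := fun g h => by
    rw [mul_comm]
    ext
    simp only [f, Subgroup.coe_mul, hsmul, map_mul]
    group
  obtain ⟨x, hx⟩ := isMulCoboundary₁_of_isMulCocycle₁_of_coprime hco hf
  refine ⟨(x : G)⁻¹, inv_mem x.2, fun k => ?_⟩
  have hk := congrArg Subtype.val (hx k)
  rw [div_eq_inv_mul] at hk
  simp only [f, Subgroup.coe_mul, Subgroup.coe_inv, hsmul] at hk
  calc φ k = φ k * (k : G)⁻¹ * k := by group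
    _ = (x : G)⁻¹ * k * (x : G)⁻¹⁻¹ := by rw [← hk]; group

theorem MonoidHom.map_mul_inv_mem_centralizer {G : Type*} [Group G] {N : Subgroup G}
    [N.Normal] (φ : G →* G) (hφ : ∀ x ∈ N, φ x = x) (g : G) :
    φ g * g⁻¹ ∈ Subgroup.centralizer N := by
  rw [Subgroup.mem_centralizer_iff]
  intro p hp
  have hq : g⁻¹ * p * g ∈ N := by simpa using Subgroup.Normal.conj_mem ‹_› p hp g⁻¹
  calc p * (φ g * g⁻¹) = φ (p * g) * g⁻¹ := by rw [map_mul, hφ p hp, mul_assoc]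
    _ = φ (g * (g⁻¹ * p * g)) * g⁻¹ := by group
    _ = φ g * g⁻¹ * p := by rw [map_mul, hφ _ hq]; group

/-- Let `G = P ⋊ K` with `P`, `K` finite of coprime orders, and suppose `K` acts
faithfully on `P` (i.e. `C_K(P) = 1`). If `φ` is an automorphism of `G` whose
restriction to `P` is the identity, then `φ` equals conjugation by some element
`w ∈ Z(P)`. -/
theorem aut_restrict_id_is_inner {G : Type*} [Group G] [Finite G] (P K : Subgroup G)
    [P.Normal] (hPK : P ⊓ K = ⊥) (hsup : P ⊔ K = ⊤)
    (hco : Nat.Coprime (Nat.card P) (Nat.card K))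
    (hfaith : K ⊓ Subgroup.centralizer (P : Set G) = ⊥)
    (φ : G ≃* G) (hφ : ∀ x ∈ P, φ x = x) :
    ∃ w ∈ P ⊓ Subgroup.centralizer (P : Set G), ∀ g : G, φ g = w * g * w⁻¹ := by
  have hcompl : P.IsComplement' K := Subgroup.isComplement'_of_disjoint_and_mul_eq_univ
    (disjoint_iff.mpr hPK) (by rw [← Subgroup.normal_mul, hsup, Subgroup.coe_top])
  have hCP : Subgroup.centralizer (P : Set G) ≤ P :=
    Subgroup.le_of_card_dvd_of_coprime_index (hcompl.symm.index_eq_card ▸ hco)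
      (Subgroup.card_dvd_of_disjoint hcompl.card_mul_card
        (disjoint_iff.mpr (inf_comm K _ ▸ hfaith)))
  have : IsMulCommutative ↥(P ⊓ Subgroup.centralizer (P : Set G)) :=
    ⟨⟨fun a b => Subtype.ext (Subgroup.mem_centralizer_iff.mp a.2.2 b b.2.1).symm⟩⟩
  obtain ⟨w, hwA, hw⟩ := Subgroup.exists_conj_eq_of_mul_inv_mem_of_coprime
    (hco.coprime_dvd_left (Subgroup.card_dvd_of_le inf_le_left)) ((φ : G →* G).comp K.subtype)
    fun k => have hk := (φ : G →* G).map_mul_inv_mem_centralizer hφ k; ⟨hCP hk, hk⟩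
  refine ⟨w, hwA, fun g => ?_⟩
  have hle : P ⊔ K ≤ (φ : G →* G).eqLocus (MulAut.conj w) := sup_le
    (fun p hp => (hφ p hp).trans <| show p = w * p * w⁻¹ by
      rw [← Subgroup.mem_centralizer_iff.mp hwA.2 p hp, mul_inv_cancel_right])
    (fun k hk => hw ⟨k, hk⟩)
  exact hle (hsup ▸ Subgroup.mem_top g)
end

section
/- Let K and A be finite groups with A abelian, K acting on A, and gcd(|K|,|A|) = 1. Then every crossed homomorphism (1-cocycle) z : K → A is principal: there exists w ∈ A with z(s) = (s·w)·w⁻¹ for all s ∈ K. -/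
/-- Let `K` and `A` be finite groups with `A` abelian, `K` acting on `A`, and
`gcd(|K|,|A|) = 1`. Then every crossed homomorphism (1-cocycle) `z : K → A`
(satisfying `z(st) = z(s)^t · z(t)`, where the right action `a^t` is written as
the left action `t⁻¹ • a`) is principal: there exists `w ∈ A` with
`z(s) = w^s · w⁻¹` for all `s ∈ K`. -/
theorem crossed_hom_is_principal {K A : Type*} [Group K] [CommGroup A]
    [Finite K] [Finite A] [MulDistribMulAction K A]
    (hco : Nat.Coprime (Nat.card K) (Nat.card A))
    (z : K → A) (hz : ∀ s t : K, z (s * t) = (t⁻¹ • z s) * z t) :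
    ∃ w : A, ∀ s : K, z s = (s⁻¹ • w) * w⁻¹ := by
  have : Fintype K := Fintype.ofFinite K
  set n := Nat.card K with hn
  set u : A := ∏ s : K, z s with hu
  have key : ∀ t : K, z t ^ n = (t⁻¹ • u)⁻¹ * u := by
    intro t
    have h1 : (∏ s : K, z (s * t)) = u := Fintype.prod_equiv (Equiv.mulRight t) _ _ (fun s => rfl)
    have h2 : (∏ s : K, z (s * t)) = (t⁻¹ • u) * z t ^ n := by
      calc (∏ s : K, z (s * t)) = ∏ s : K, (t⁻¹ • z s) * z t := by
            simp only [hz]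
        _ = (∏ s : K, t⁻¹ • z s) * ∏ _s : K, z t := Finset.prod_mul_distrib
        _ = (t⁻¹ • u) * z t ^ n := by
            rw [hu, Finset.smul_prod', Finset.prod_const, hn,
              Nat.card_eq_fintype_card, Finset.card_univ]
    rw [h1] at h2
    exact eq_inv_mul_iff_mul_eq.mpr h2.symm
  set v : A := (powCoprime hco.symm).symm u with hv
  have hvn : v ^ n = u := (powCoprime hco.symm).apply_symm_apply u
  refine ⟨v⁻¹, fun t => ?_⟩
  apply (powCoprime hco.symm).injective
  show z t ^ n = ((t⁻¹ • v⁻¹) * v⁻¹⁻¹) ^ n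
  rw [key t, mul_pow, inv_inv, hvn, ← smul_pow', inv_pow, ← smul_inv', hvn]
end

section
/- Let G = P ⋊ K with P a finite p-group and K a p'-group acting faithfully on P. Let γ, δ be automorphisms of G and let x ∈ G. If Δ_γ(P) = {(γ(y),y) : y ∈ P} and Δ_δ(P) are conjugate in G × G, then δ ∘ γ⁻¹ agrees on P with an inner automorphism of G, and hence δ ∘ γ⁻¹ is inner. -/
/-!
If `(a, b)` conjugates `Δ_γ(P)` onto `Δ_δ(P)`, then `θ = γ⁻¹ ∘ ι_{a⁻¹} ∘ δ ∘ ι_b` (with `ι_x` the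
conjugation by `x`) fixes `P` pointwise, so `θ(g) g⁻¹ ∈ C_G(P)` for every `g`. Faithfulness of the
coprime action forces `C_G(P) ≤ P`, so `C_G(P) = Z(P)` is an abelian `p`-group and
`k ↦ θ(k) k⁻¹` is a crossed homomorphism from the `p'`-group `K` into it. Averaging over `K`
shows that it is a coboundary `k ↦ w (k w k⁻¹)⁻¹`, so `θ` is conjugation by `w` on `K`, and on `P`
because `w ∈ Z(P)`; hence on `G = P K`.
-/

open Subgroup

theorem crossedHom_eq_coboundary_of_coprime {K A : Type*} [Group K] [Finite K] [CommGroup A]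
    (hcop : (Nat.card A).Coprime (Nat.card K)) (φ : K →* MulAut A) (f : K → A)
    (hf : ∀ k l, f (k * l) = f k * φ k (f l)) : ∃ w : A, ∀ k, f k = w * (φ k w)⁻¹ := by
  have := Fintype.ofFinite K
  set W := ∏ l, f l
  have hW : ∀ k, W = f k ^ Nat.card K * φ k W := fun k => calc
    W = ∏ l, f (k * l) := (Equiv.prod_comp (Equiv.mulLeft k) f).symm
    _ = f k ^ Nat.card K * φ k W := by
      simp only [hf, Finset.prod_mul_distrib, Finset.prod_const, Finset.card_univ,
        Nat.card_eq_fintype_card, map_prod, W]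
  refine ⟨(powCoprime hcop).symm W, fun k => (powCoprime hcop).injective ?_⟩
  have hw : (powCoprime hcop).symm W ^ Nat.card K = W := (powCoprime hcop).apply_symm_apply W
  simp only [powCoprime_apply, mul_pow, inv_pow, ← map_pow, hw]
  exact eq_mul_inv_of_mul_eq (hW k).symm

theorem apply_conj_eq_of_map_prod_eq_map_conj {G H : Type*} [Group G] [Group H] {γ δ : G →* H}
    {P : Subgroup G} {a : H} {b : G}
    (h : P.map (δ.prod (MonoidHom.id G)) =
      (P.map (γ.prod (MonoidHom.id G))).map (MulAut.conj (a, b)).toMonoidHom) :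
    ∀ v ∈ P, δ (b * v * b⁻¹) = a * γ v * a⁻¹ := by
  intro v hv
  have : (a * γ v * a⁻¹, b * v * b⁻¹) ∈ P.map (δ.prod (MonoidHom.id G)) :=
    h ▸ mem_map_of_mem _ (mem_map_of_mem _ hv)
  obtain ⟨u, -, hu⟩ := mem_map.mp this
  simp only [MonoidHom.prod_apply, MonoidHom.id_apply, Prod.mk.injEq] at hu
  rw [← hu.2, hu.1]

section

variable {G : Type*} [Group G]

theorem apply_mul_inv_mem_centralizer_of_fixes {N : Subgroup G} [N.Normal] {θ : G →* G}
    (hθ : ∀ n ∈ N, θ n = n) (g : G) : θ g * g⁻¹ ∈ centralizer (N : Set G) := by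
  rw [mem_centralizer_iff]
  intro u hu
  have hconj : (θ g)⁻¹ * u * θ g = g⁻¹ * u * g := by
    have hmem : g⁻¹ * u * g ∈ N := by simpa using ‹N.Normal›.conj_mem u hu g⁻¹
    rw [← hθ _ hmem, map_mul, map_mul, map_inv, hθ u hu]
  calc u * (θ g * g⁻¹) = θ g * ((θ g)⁻¹ * u * θ g) * g⁻¹ := by group
    _ = θ g * g⁻¹ * u := by rw [hconj]; group

open scoped IsMulCommutative in
theorem exists_mem_centralizer_eq_conj_of_coprime {N K : Subgroup G} [N.Normal] [Finite K]
    (hsup : N ⊔ K = ⊤) [IsMulCommutative (centralizer (N : Set G))]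
    (hcop : (Nat.card (centralizer (N : Set G))).Coprime (Nat.card K)) {θ : G →* G}
    (hθ : ∀ n ∈ N, θ n = n) :
    ∃ w ∈ centralizer (N : Set G), ∀ g, θ g = w * g * w⁻¹ := by
  let f : K → centralizer (N : Set G) :=
    fun k => ⟨θ k * (k : G)⁻¹, apply_mul_inv_mem_centralizer_of_fixes hθ k⟩
  obtain ⟨w, hw⟩ := crossedHom_eq_coboundary_of_coprime hcop
    (MulAut.conjNormal.comp K.subtype) f fun k l => Subtype.ext <| by
      simp only [f, MulAut.conjNormal_apply, coe_mul, map_mul, MonoidHom.coe_comp,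
        Function.comp_apply, coe_subtype]
      group
  refine ⟨w, w.2, fun g => ?_⟩
  suffices N ⊔ K ≤ MonoidHom.eqLocus θ (MulAut.conj (w : G)).toMonoidHom from
    this (hsup ▸ mem_top g)
  refine sup_le (fun n hn => ?_) (fun k hk => ?_)
  · show θ n = w * n * (w : G)⁻¹
    rw [hθ n hn, (mem_centralizer_iff.mp w.2 n hn).symm, mul_inv_cancel_right]
  · have hfk := congrArg Subtype.val (hw ⟨k, hk⟩)
    simp only [f, MulAut.conjNormal_apply, coe_mul, coe_inv, MonoidHom.coe_comp,
      Function.comp_apply, coe_subtype] at hfk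
    show θ k = w * k * (w : G)⁻¹
    rw [← inv_mul_cancel_right (θ k) k, hfk]
    group

theorem centralizer_le_self_of_coprime {p : ℕ} [Fact p.Prime] {P K : Subgroup G} [P.Normal]
    (hsup : P ⊔ K = ⊤) (hP : IsPGroup p P) (hK : ¬ p ∣ Nat.card K)
    (hfaith : K ⊓ centralizer (P : Set G) = ⊥) : centralizer (P : Set G) ≤ P := by
  intro g hg
  obtain ⟨y, hy, k, hk, hyk⟩ := mem_sup_of_normal_left.mp (hsup ▸ mem_top g : g ∈ P ⊔ K)
  obtain ⟨n, hn⟩ := hP ⟨y, hy⟩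
  have hkn : k ^ p ^ n = g ^ p ^ n := by
    have hyn : y ^ p ^ n = 1 := by simpa using congrArg Subtype.val hn
    have hcomm : Commute y⁻¹ g := Commute.inv_left (mem_centralizer_iff.mp hg y hy)
    rw [← inv_mul_cancel_left y k, hyk, hcomm.mul_pow, inv_pow, hyn, inv_one, one_mul]
  have hk1 : k = 1 := by
    have : k ^ p ^ n ∈ K ⊓ centralizer (P : Set G) := ⟨pow_mem hk _, hkn ▸ pow_mem hg _⟩
    rw [hfaith, mem_bot] at this
    exact orderOf_eq_one_iff.mp <| Nat.eq_one_of_dvd_coprimes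
      ((Nat.Prime.coprime_iff_not_dvd Fact.out).mpr hK |>.pow_left n)
      (orderOf_dvd_of_pow_eq_one this) (K.orderOf_dvd_natCard hk)
  rwa [← hyk, hk1, mul_one]

theorem isMulCommutative_centralizer_of_le {P : Subgroup G} (h : centralizer (P : Set G) ≤ P) :
    IsMulCommutative (centralizer (P : Set G)) :=
  le_centralizer_iff_isMulCommutative.mp (h.trans (le_centralizer_iff.mp le_rfl))

end

theorem conj_twisted_diagonal_inner_general {G : Type*} [Group G] [Finite G] (p : ℕ) [Fact p.Prime]
    (P K : Subgroup G) [P.Normal] (hsup : P ⊔ K = ⊤)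
    (hP : IsPGroup p P) (hK : ¬ p ∣ Nat.card K)
    (hfaith : K ⊓ Subgroup.centralizer (P : Set G) = ⊥)
    (γ δ : G ≃* G)
    (hconj : ∃ c : G × G,
        P.map (δ.toMonoidHom.prod (MonoidHom.id G)) =
          Subgroup.map (MulAut.conj c).toMonoidHom
            (P.map (γ.toMonoidHom.prod (MonoidHom.id G)))) :
    ∃ x : G, ∀ g : G, δ (γ.symm g) = x * g * x⁻¹ := by
  obtain ⟨⟨a, b⟩, hc⟩ := hconj
  have hδ := apply_conj_eq_of_map_prod_eq_map_conj hc
  have hCP := centralizer_le_self_of_coprime hsup hP hK hfaith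
  have := isMulCommutative_centralizer_of_le hCP
  have hcop : (Nat.card (centralizer (P : Set G))).Coprime (Nat.card K) := by
    obtain ⟨n, hn⟩ := IsPGroup.iff_card.mp (hP.to_le hCP)
    exact hn ▸ ((Nat.Prime.coprime_iff_not_dvd Fact.out).mpr hK).pow_left n
  let θ : G →* G := γ.symm.toMonoidHom.comp <| (MulAut.conj a⁻¹).toMonoidHom.comp <|
    δ.toMonoidHom.comp (MulAut.conj b).toMonoidHom
  obtain ⟨w, -, hw⟩ := exists_mem_centralizer_eq_conj_of_coprime (θ := θ) hsup hcop fun v hv => by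
    show γ.symm (a⁻¹ * δ (b * v * b⁻¹) * a⁻¹⁻¹) = v
    rw [show δ (b * v * b⁻¹) = a * γ v * a⁻¹ from hδ v hv]
    simp [mul_assoc]
  have hδγ : ∀ g, a⁻¹ * δ (γ.symm g) * a = γ (w * b⁻¹) * g * (γ (w * b⁻¹))⁻¹ := fun g =>
    γ.symm.injective <| by simpa [θ, mul_assoc] using hw (b⁻¹ * γ.symm g * b)
  refine ⟨a * γ (w * b⁻¹), fun g => ?_⟩
  calc δ (γ.symm g) = a * (a⁻¹ * δ (γ.symm g) * a) * a⁻¹ := by group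
    _ = a * γ (w * b⁻¹) * g * (a * γ (w * b⁻¹))⁻¹ := by rw [hδγ]; group

/-- Let `G = P ⋊ K` with `P` a finite `p`-group and `K` a `p'`-group acting
faithfully on `P`. Let `γ, δ` be automorphisms of `G`. If the twisted diagonals
`Δ_γ(P) = {(γ(y),y) : y ∈ P}` and `Δ_δ(P)` are conjugate in `G × G`, then
`δ ∘ γ⁻¹` is an inner automorphism of `G`. -/
theorem conj_twisted_diagonal_inner {G : Type*} [Group G] [Finite G] (p : ℕ) [Fact p.Prime]
    (P K : Subgroup G) [P.Normal] (hPK : P ⊓ K = ⊥) (hsup : P ⊔ K = ⊤)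
    (hP : IsPGroup p P) (hK : ¬ p ∣ Nat.card K)
    (hfaith : K ⊓ Subgroup.centralizer (P : Set G) = ⊥)
    (γ δ : G ≃* G)
    (hconj : ∃ c : G × G,
        P.map (δ.toMonoidHom.prod (MonoidHom.id G)) =
          Subgroup.map (MulAut.conj c).toMonoidHom
            (P.map (γ.toMonoidHom.prod (MonoidHom.id G)))) :
    ∃ x : G, ∀ g : G, δ (γ.symm g) = x * g * x⁻¹ :=
  conj_twisted_diagonal_inner_general p P K hsup hP hK hfaith γ δ hconj
end

section
/- Let G = P ⋊ K with P a finite p-group and K a cyclic p'-group acting faithfully on P. For γ ∈ Aut(G), set N = N_{G×G}(Δ_γ(P)) and N̄ = N/Δ_γ(P), where Δ_γ(P) = {(γ(y),y) : y ∈ P}. Then the second projection induces a split short exact sequence 1 → Z(P) → N̄ → K → 1, split by the map x ∈ K ↦ (γ(x), x)·Δ_γ(P). -/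
/-!
Write `Δ = Δ_γ(P)`. Since `P` is a normal Sylow subgroup it is characteristic, so `γ(P) = P`.
Every `(γ g, g)` normalizes `Δ` because `P` is normal, and `(a, b) = (a γ(b)⁻¹, 1) (γ b, b)`;
hence `(a, b) ∈ N_{G×G}(Δ)` iff `a γ(b)⁻¹ ∈ C_G(P)`. Faithfulness gives `C_G(P) ≤ P`: if
`x k` (with `x ∈ P`, `k ∈ K`) centralizes `P`, then `x` and `k` commute and have coprime
orders, so `k` is a power of `x k` and centralizes `P` as well, forcing `k = 1`.
-/

namespace Subgroup

variable {G : Type*} [Group G]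

def twistedDiagonal (γ : G ≃* G) (P : Subgroup G) : Subgroup (G × G) :=
  P.map (γ.toMonoidHom.prod (MonoidHom.id G))

section TwistedDiagonal

variable (γ : G ≃* G) (P : Subgroup G)

theorem mem_twistedDiagonal {a b : G} : (a, b) ∈ twistedDiagonal γ P ↔ b ∈ P ∧ a = γ b := by
  simp only [twistedDiagonal, mem_map, MonoidHom.prod_apply, MulEquiv.coe_toMonoidHom,
    MonoidHom.id_apply, Prod.mk.injEq]
  constructor
  · rintro ⟨y, hy, rfl, rfl⟩
    exact ⟨hy, rfl⟩
  · rintro ⟨hb, rfl⟩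
    exact ⟨b, hb, rfl, rfl⟩

theorem graph_mem_normalizer_twistedDiagonal [P.Normal] (g : G) :
    (γ g, g) ∈ normalizer (twistedDiagonal γ P : Set (G × G)) :=
  le_normalizer_map _ ⟨g, normalizer_eq_top (H := P) ▸ mem_top g, rfl⟩

theorem mk_one_mem_normalizer_twistedDiagonal_iff {z : G} :
    (z, 1) ∈ normalizer (twistedDiagonal γ P : Set (G × G)) ↔
      z ∈ centralizer (P.map γ.toMonoidHom : Set G) := by
  have hconj : ∀ a b : G, (z, (1 : G)) * (a, b) * (z, 1)⁻¹ = (z * a * z⁻¹, b) := by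
    simp
  simp only [mem_normalizer_iff, Prod.forall, hconj, mem_twistedDiagonal, mem_centralizer_iff,
    coe_map, Set.forall_mem_image, MulEquiv.coe_toMonoidHom]
  constructor
  · intro h y hy
    have := ((h (γ y) y).1 ⟨hy, rfl⟩).2
    rw [mul_inv_eq_iff_eq_mul] at this
    exact this.symm
  · intro h a b
    refine and_congr_right fun hb => ?_
    rw [mul_inv_eq_iff_eq_mul, h hb, mul_left_cancel_iff]

theorem mem_normalizer_twistedDiagonal_iff [P.Normal] {a b : G} :
    (a, b) ∈ normalizer (twistedDiagonal γ P : Set (G × G)) ↔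
      a * (γ b)⁻¹ ∈ centralizer (P.map γ.toMonoidHom : Set G) := by
  have hfactor : (a, b) = (a * (γ b)⁻¹, (1 : G)) * (γ b, b) := by simp
  rw [hfactor, mul_mem_cancel_right (graph_mem_normalizer_twistedDiagonal γ P b),
    mk_one_mem_normalizer_twistedDiagonal_iff]

end TwistedDiagonal

theorem map_mulEquiv_eq_self_of_normal_of_isPGroup [Finite G] {p : ℕ} [Fact p.Prime]
    {P : Subgroup G} [P.Normal] (hP : IsPGroup p P) (hindex : ¬ p ∣ P.index) (γ : G ≃* G) :
    P.map γ.toMonoidHom = P := by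
  have hchar := Sylow.characteristic_of_normal (hP.toSylow hindex)
    (by rw [IsPGroup.toSylow_coe]; infer_instance)
  simpa using characteristic_iff_map_eq.mp hchar γ

theorem _root_.Commute.mem_zpowers_mul_of_coprime {x k : G} (hxk : Commute x k)
    (hco : (orderOf x).Coprime (orderOf k)) : k ∈ zpowers (x * k) := by
  obtain ⟨m, hm⟩ := exists_pow_eq_self_of_coprime hco
  refine ⟨(orderOf x * m : ℕ), ?_⟩
  show (x * k) ^ ((orderOf x * m : ℕ) : ℤ) = k
  rw [zpow_natCast, pow_mul, hxk.mul_pow, pow_orderOf_eq_one, one_mul, hm]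

theorem centralizer_le_of_sup_eq_top {p : ℕ} [Fact p.Prime] {P K : Subgroup G} [P.Normal]
    (hP : IsPGroup p P) (hK : ¬ p ∣ Nat.card K) (hfaith : K ⊓ centralizer (P : Set G) = ⊥)
    (hsup : P ⊔ K = ⊤) : centralizer (P : Set G) ≤ P := by
  intro z hz
  obtain ⟨x, hx, k, hk, rfl⟩ := mem_sup_of_normal_left.mp (hsup ▸ mem_top z)
  have hxk : Commute x k := by
    have hxz : Commute x (x * k) := mem_centralizer_iff.mp hz x hx
    simpa using (Commute.refl x).inv_right.mul_right hxz
  have hco : (orderOf x).Coprime (orderOf k) := by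
    have hpk : p.Coprime (orderOf k) := (Nat.Prime.coprime_iff_not_dvd Fact.out).mpr
      fun hdvd => hK (hdvd.trans (orderOf_dvd_natCard K hk))
    simpa using hP.orderOf_coprime hpk ⟨x, hx⟩
  have hkC : k ∈ centralizer (P : Set G) :=
    zpowers_le.mpr hz (hxk.mem_zpowers_mul_of_coprime hco)
  have hk1 : k = 1 := by
    simpa [hfaith] using mem_inf.mpr ⟨hk, hkC⟩
  simpa [hk1] using hx

end Subgroup

theorem twisted_diagonal_normalizer_ses_general {G : Type*} [Group G] [Finite G] (p : ℕ)
    [Fact p.Prime] (P K : Subgroup G) [P.Normal] (hPK : P ⊓ K = ⊥) (hsup : P ⊔ K = ⊤)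
    (hP : IsPGroup p P) (hK : ¬ p ∣ Nat.card K)
    (hfaith : K ⊓ Subgroup.centralizer (P : Set G) = ⊥)
    (γ : G ≃* G) :
    (∀ z ∈ P ⊓ Subgroup.centralizer (P : Set G),
        (z, (1 : G)) ∈ Subgroup.normalizer (P.map (γ.toMonoidHom.prod (MonoidHom.id G)) : Set (G × G)) ∧
          ((z, (1 : G)) ∈ P.map (γ.toMonoidHom.prod (MonoidHom.id G)) ↔ z = 1)) ∧
    (∀ n ∈ Subgroup.normalizer (P.map (γ.toMonoidHom.prod (MonoidHom.id G)) : Set (G × G)),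
        (n.2 ∈ P ↔ ∃ z ∈ P ⊓ Subgroup.centralizer (P : Set G),
          ∃ d ∈ P.map (γ.toMonoidHom.prod (MonoidHom.id G)), n = (z, (1 : G)) * d)) ∧
    (∀ g : G, ∃ n ∈ Subgroup.normalizer (P.map (γ.toMonoidHom.prod (MonoidHom.id G)) : Set (G × G)),
        n.2 * g⁻¹ ∈ P) ∧
    (∀ x ∈ K, (γ x, x) ∈ Subgroup.normalizer (P.map (γ.toMonoidHom.prod (MonoidHom.id G)) : Set (G × G))) := by
  have hcompl : Subgroup.IsComplement' P K := Subgroup.isComplement'_of_disjoint_and_mul_eq_univ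
    (disjoint_iff.mpr hPK) (by rw [← Subgroup.normal_mul, hsup, Subgroup.coe_top])
  have hγP := Subgroup.map_mulEquiv_eq_self_of_normal_of_isPGroup hP
    (hcompl.symm.index_eq_card ▸ hK) γ
  have hCP := Subgroup.centralizer_le_of_sup_eq_top hP hK hfaith hsup
  have hN (a b : G) : (a, b) ∈ Subgroup.normalizer (Subgroup.twistedDiagonal γ P : Set (G × G)) ↔
      a * (γ b)⁻¹ ∈ Subgroup.centralizer (P : Set G) := by
    rw [Subgroup.mem_normalizer_twistedDiagonal_iff, hγP]
  refine ⟨fun z hz => ⟨?_, ?_⟩, fun ⟨a, b⟩ hn => ⟨fun hb => ?_, ?_⟩,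
    fun g => ⟨_, Subgroup.graph_mem_normalizer_twistedDiagonal γ P g, by simp⟩,
    fun x _ => Subgroup.graph_mem_normalizer_twistedDiagonal γ P x⟩
  · exact (hN z 1).mpr (by simpa using hz.2)
  · exact (Subgroup.mem_twistedDiagonal γ P).trans (by simp)
  · have hz : a * (γ b)⁻¹ ∈ Subgroup.centralizer (P : Set G) := (hN a b).mp hn
    exact ⟨_, ⟨hCP hz, hz⟩, (γ b, b), (Subgroup.mem_twistedDiagonal γ P).mpr ⟨hb, rfl⟩, by simp⟩
  · rintro ⟨z, -, ⟨c, d⟩, hd, hnd⟩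
    obtain ⟨-, rfl⟩ : a = z * c ∧ b = d := by simpa using hnd
    exact ((Subgroup.mem_twistedDiagonal γ P).mp hd).1

/-- Let `G = P ⋊ K` with `P` a finite `p`-group and `K` a cyclic `p'`-group acting
faithfully on `P`. For `γ ∈ Aut(G)`, set `N = N_{G×G}(Δ_γ(P))` where
`Δ_γ(P) = {(γ(y),y) : y ∈ P}`. Then the second projection (composed with the
projection `G → G/P ≅ K`) induces a split short exact sequence
`1 → Z(P) → N/Δ_γ(P) → K → 1`, split by `x ∈ K ↦ (γ(x), x)·Δ_γ(P)`:
`z ↦ (z,1)Δ_γ(P)` is an injection of `Z(P)` into `N/Δ_γ(P)`, its image is exactly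
the kernel of the induced map, the induced map is surjective, and the section
`x ↦ (γ(x),x)` lands in `N`. -/
theorem twisted_diagonal_normalizer_ses {G : Type*} [Group G] [Finite G] (p : ℕ)
    [Fact p.Prime] (P K : Subgroup G) [P.Normal] (hPK : P ⊓ K = ⊥) (hsup : P ⊔ K = ⊤)
    (hP : IsPGroup p P) (hKcyc : IsCyclic K) (hK : ¬ p ∣ Nat.card K)
    (hfaith : K ⊓ Subgroup.centralizer (P : Set G) = ⊥)
    (γ : G ≃* G) :
    (∀ z ∈ P ⊓ Subgroup.centralizer (P : Set G),
        (z, (1 : G)) ∈ Subgroup.normalizer (P.map (γ.toMonoidHom.prod (MonoidHom.id G)) : Set (G × G)) ∧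
          ((z, (1 : G)) ∈ P.map (γ.toMonoidHom.prod (MonoidHom.id G)) ↔ z = 1)) ∧
    (∀ n ∈ Subgroup.normalizer (P.map (γ.toMonoidHom.prod (MonoidHom.id G)) : Set (G × G)),
        (n.2 ∈ P ↔ ∃ z ∈ P ⊓ Subgroup.centralizer (P : Set G),
          ∃ d ∈ P.map (γ.toMonoidHom.prod (MonoidHom.id G)), n = (z, (1 : G)) * d)) ∧
    (∀ g : G, ∃ n ∈ Subgroup.normalizer (P.map (γ.toMonoidHom.prod (MonoidHom.id G)) : Set (G × G)),
        n.2 * g⁻¹ ∈ P) ∧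
    (∀ x ∈ K, (γ x, x) ∈ Subgroup.normalizer (P.map (γ.toMonoidHom.prod (MonoidHom.id G)) : Set (G × G))) :=
  twisted_diagonal_normalizer_ses_general p P K hPK hsup hP hK hfaith γ
end

section
/- Let G be a finite group with a normal Sylow p-subgroup P such that C_G(P) ≤ P (i.e. C_G(P) = Z(P)). Then the group algebra kG over an algebraically closed field k of characteristic p has only one block. -/
/-!
Let `π : kG → k[G ⧸ P]`. The coefficients of a central `e` are constant on `P`-conjugacy
classes, and in characteristic `p` every orbit of the `p`-group `P` of length `> 1` contributes
`0` to a coset sum; only the fixed points `C_G(P) ≤ P` survive, so `π e` is a scalar. Being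
idempotent, that scalar is `0` or `1`, hence `e` or `1 - e` is an idempotent in `ker π`.

This kernel lies in `kG · I(P)`, where `I(P)` is spanned by the `u - 1`, `u ∈ P`. Normality of `P`
gives `(kG · I(P))ⁿ ≤ kG · I(P)ⁿ`, and `I(P)` is nilpotent since `P` is a `p`-group: modulo a
central cyclic subgroup `⟨z⟩` this holds by induction, and the kernel of `kQ → k[Q ⧸ ⟨z⟩]` lies
in `kQ · (z - 1)`, where `(z - 1) ^ p ^ m = z ^ p ^ m - 1 = 0`. An idempotent in a nilpotent
ideal is `0`.
-/

open MonoidAlgebra MulAction Submodule Set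

theorem IsPGroup.sum_eq_sum_fixedPoints {p : ℕ} [Fact p.Prime] {H α : Type*} (R : Type*)
    {M : Type*} [Group H] [MulAction H α] [Fintype α] [DecidablePred (· ∈ fixedPoints H α)]
    [Semiring R] [CharP R p] [AddCommMonoid M] [Module R M]
    (hH : IsPGroup p H) (φ : α → M) (hφ : ∀ (h : H) a, φ (h • a) = φ a) :
    ∑ a, φ a = ∑ a with a ∈ fixedPoints H α, φ a := by
  classical
  have sum_eq_sum_orbits (ψ : α → M) (hψ : ∀ (h : H) a, ψ (h • a) = ψ a) :
      ∑ a, ψ a = ∑ ω : Quotient (orbitRel H α), Nat.card (orbit H ω.out) • ψ ω.out := by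
    rw [← (selfEquivSigmaOrbits H α).symm.sum_comp, Fintype.sum_sigma]
    refine Fintype.sum_congr _ _ fun ω => ?_
    rw [Nat.card_eq_fintype_card, ← Finset.card_univ, ← Finset.sum_const]
    exact Fintype.sum_congr _ _ fun ⟨_, h, rfl⟩ => hψ h _
  have smul_mem_fixedPoints_iff (h : H) (a : α) :
      h • a ∈ fixedPoints H α ↔ a ∈ fixedPoints H α := by
    simp only [← subsingleton_orbit_iff_mem_fixedPoints, orbit_smul]
  rw [Finset.sum_filter, sum_eq_sum_orbits φ hφ,
    sum_eq_sum_orbits _ fun h a => by simp only [smul_mem_fixedPoints_iff, hφ]]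
  refine Fintype.sum_congr _ _ fun ω => ?_
  by_cases hfix : ω.out ∈ fixedPoints H α
  · rw [if_pos hfix]
  · obtain ⟨n, hn⟩ := hH.card_orbit ω.out
    have hn0 : n ≠ 0 := by
      rintro rfl
      exact hfix (mem_fixedPoints_iff_card_orbit_eq_one.mpr (by rwa [← Nat.card_eq_fintype_card]))
    rw [if_neg hfix, hn, ← Nat.cast_smul_eq_nsmul R, Nat.cast_pow, CharP.cast_eq_zero,
      zero_pow hn0, zero_smul, smul_zero]

theorem IsPGroup.sum_eq_sum_centralizer {p : ℕ} [Fact p.Prime] {G : Type*} (R : Type*)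
    {M : Type*} [Group G] [Fintype G] {P : Subgroup G}
    [DecidablePred (· ∈ Subgroup.centralizer (P : Set G))]
    [Semiring R] [CharP R p] [AddCommMonoid M] [Module R M]
    (hP : IsPGroup p P) (φ : G → M) (hφ : ∀ u ∈ P, ∀ g, φ (u * g * u⁻¹) = φ g) :
    ∑ g, φ g = ∑ g with g ∈ Subgroup.centralizer (P : Set G), φ g := by
  classical
  let H := P.map (ConjAct.toConjAct : G ≃* ConjAct G).toMonoidHom
  have hH : IsPGroup p H := hP.map _
  have mem_fixedPoints_iff (g : G) :
      g ∈ fixedPoints H G ↔ g ∈ Subgroup.centralizer (P : Set G) := by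
    rw [mem_fixedPoints, Subgroup.mem_centralizer_iff]
    constructor
    · intro hg u hu
      have : u * g * u⁻¹ = g := hg ⟨ConjAct.toConjAct u, u, hu, rfl⟩
      rwa [mul_inv_eq_iff_eq_mul] at this
    · rintro hg ⟨_, u, hu, rfl⟩
      show u * g * u⁻¹ = g
      rw [mul_inv_eq_iff_eq_mul, hg u hu]
  rw [hH.sum_eq_sum_fixedPoints R φ fun ⟨_, u, hu, rfl⟩ g => hφ u hu g]
  exact Finset.sum_congr (Finset.filter_congr fun g _ => mem_fixedPoints_iff g) fun _ _ => rfl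

theorem mul_pow_le_mul_pow {M : Type*} [Monoid M] [Preorder M] [MulLeftMono M] [MulRightMono M]
    {a b : M} (h1 : 1 ≤ a) (haa : a * a ≤ a) (hba : b * a ≤ a * b) (n : ℕ) :
    (a * b) ^ n ≤ a * b ^ n := by
  have pow_mul_le (n : ℕ) : b ^ n * a ≤ a * b ^ n := by
    induction n with
    | zero => simp
    | succ n ih =>
      calc b ^ (n + 1) * a = b ^ n * (b * a) := by rw [pow_succ, mul_assoc]
        _ ≤ b ^ n * (a * b) := by gcongr
        _ = b ^ n * a * b := by rw [mul_assoc]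
        _ ≤ a * b ^ n * b := by gcongr
        _ = a * b ^ (n + 1) := by rw [pow_succ, mul_assoc]
  induction n with
  | zero => simpa using h1
  | succ n ih =>
    calc (a * b) ^ (n + 1) = (a * b) ^ n * (a * b) := pow_succ _ _
      _ ≤ a * b ^ n * (a * b) := by gcongr
      _ = a * (b ^ n * a) * b := by simp only [mul_assoc]
      _ ≤ a * (a * b ^ n) * b := mul_le_mul_left (mul_le_mul_right (pow_mul_le n) a) b
      _ = a * a * b ^ (n + 1) := by rw [pow_succ]; simp only [mul_assoc]
      _ ≤ a * b ^ (n + 1) := by gcongr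

theorem Submodule.span_singleton_mul_top_le {R A : Type*} [CommSemiring R] [Semiring A]
    [Algebra R A] {c : A} (hc : ∀ a, Commute c a) : span R {c} * ⊤ ≤ ⊤ * span R {c} := by
  rw [Submodule.mul_le]
  intro m hm n _
  obtain ⟨r, rfl⟩ := mem_span_singleton.mp hm
  rw [smul_mul_assoc, (hc n).eq, ← mul_smul_comm]
  exact mul_mem_mul mem_top hm

theorem Submodule.isNilpotent_top_mul_span_singleton {R A : Type*} [CommSemiring R] [Semiring A]
    [Algebra R A] {c : A} (hc : ∀ a, Commute c a) (hnil : IsNilpotent c) :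
    IsNilpotent (⊤ * span R {c}) := by
  obtain ⟨n, hn⟩ := hnil
  refine ⟨n, le_bot_iff.mp ?_⟩
  calc (⊤ * span R {c}) ^ n ≤ ⊤ * span R {c} ^ n :=
        mul_pow_le_mul_pow le_top le_top (span_singleton_mul_top_le hc) n
    _ = ⊥ := by rw [span_pow, Set.singleton_pow, hn, span_zero_singleton, mul_bot]

theorem IsIdempotentElem.eq_zero_of_mem_of_isNilpotent {R A : Type*} [CommSemiring R]
    [Semiring A] [Algebra R A] {M : Submodule R A} (hM : IsNilpotent M) {e : A}
    (he : IsIdempotentElem e) (heM : e ∈ M) : e = 0 := by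
  obtain ⟨n, hn⟩ := hM
  have : e ^ n = 0 := by simpa [hn] using Submodule.pow_mem_pow M heM n
  rw [← he.pow_succ_eq n, pow_succ, this, zero_mul]

namespace MonoidAlgebra

section Semiring

variable {k : Type*} [Semiring k]

instance charP {M : Type*} [Monoid M] {p : ℕ} [CharP k p] : CharP (MonoidAlgebra k M) p :=
  charP_of_injective_ringHom (f := singleOneRingHom) single_right_injective p

theorem span_range_of {M : Type*} [Monoid M] : span k (range (of k M)) = ⊤ :=
  eq_top_iff.2 fun f _ => span_mono (image_subset_range _ _) (mem_span_support_coeff f)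

variable {G : Type*} [Group G]

theorem coeff_conj_of_commute {e : MonoidAlgebra k G} {g : G} (h : Commute e (of k G g))
    (x : G) : e.coeff (g * x * g⁻¹) = e.coeff x := by
  simpa [mul_assoc] using congrArg (coeff · (g * x)) h.eq

theorem commute_of_of_mem_center {z : G} (hz : z ∈ Subgroup.center G) (a : MonoidAlgebra k G) :
    Commute (of k G z) a := by
  induction a using induction_linear with
  | zero => exact Commute.zero_right _
  | add x y hx hy => exact hx.add_right hy
  | single g r => simp [Commute, SemiconjBy, single_mul_single, Subgroup.mem_center_iff.mp hz g]

end Semiring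

variable {k : Type*} [CommRing k] {G H : Type*} [Group G] [Group H]

theorem mapDomainAlgHom_of_sub_one (f : G →* H) (g : G) :
    mapDomainAlgHom k k f (of k G g - 1) = of k H (f g) - 1 := by
  rw [map_sub, map_one]
  simp [mapDomain_single]

variable (k) in
/-- For `K = ⊤` this is the augmentation ideal of `kG`; in general `⊤ * augmentationSpan k K`
is the left ideal `kG · I(K)`. -/
noncomputable def augmentationSpan (K : Subgroup G) : Submodule k (MonoidAlgebra k G) :=
  span k (range fun u : K => of k G u - 1)

theorem augmentationSpan_mul_top_le (K : Subgroup G) [K.Normal] :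
    augmentationSpan k K * ⊤ ≤ ⊤ * augmentationSpan k K := by
  conv_lhs => rw [← span_range_of]
  rw [augmentationSpan, span_mul_span, span_le]
  rintro _ ⟨_, ⟨u, rfl⟩, _, ⟨g, rfl⟩, rfl⟩
  have hconj : g⁻¹ * u * g ∈ K := by simpa using ‹K.Normal›.conj_mem _ u.2 g⁻¹
  have : (of k G u - 1) * of k G g = of k G g * (of k G (g⁻¹ * u * g) - 1) := by
    simp only [sub_mul, mul_sub, ← map_mul, one_mul, mul_one, mul_assoc, mul_inv_cancel_left]
  simp only [SetLike.mem_coe, this]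
  exact mul_mem_mul mem_top (subset_span ⟨⟨_, hconj⟩, rfl⟩)

theorem ker_mapDomainLinearMap_mk_le (K : Subgroup G) :
    LinearMap.ker (mapDomainLinearMap k k (QuotientGroup.mk : G → G ⧸ K)) ≤
      ⊤ * augmentationSpan k K := by
  intro x hx
  -- `σ` picks a representative of each coset, so `mapDomain σ` factors through the quotient.
  let σ : G → G := fun g => (g : G ⧸ K).out
  have hσ (g : G) : (σ g)⁻¹ * g ∈ K := QuotientGroup.eq.mp (QuotientGroup.out_eq' _)
  have sub_mapDomain_mem (y : MonoidAlgebra k G) :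
      y - mapDomain σ y ∈ ⊤ * augmentationSpan k K := by
    induction y using induction_linear with
    | zero => simp [mapDomain_zero]
    | add y z hy hz => rw [mapDomain_add, add_sub_add_comm]; exact add_mem hy hz
    | single g r =>
      have : single g r - single (σ g) r = r • (of k G (σ g) * (of k G ((σ g)⁻¹ * g) - 1)) := by
        simp [mul_sub, smul_sub]
      rw [mapDomain_single, this]
      exact smul_mem _ _ (mul_mem_mul mem_top (subset_span ⟨⟨_, hσ g⟩, rfl⟩))
  have hσx : mapDomain σ x = 0 := by
    have : mapDomain σ x = mapDomain Quotient.out (mapDomain (QuotientGroup.mk : G → G ⧸ K) x) := by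
      ext1; simp only [mapDomain, coeff_ofCoeff, ← Finsupp.mapDomain_comp]; rfl
    rw [this, show mapDomain (QuotientGroup.mk : G → G ⧸ K) x = 0 from hx, mapDomain_zero]
  simpa [hσx] using sub_mapDomain_mem x

theorem map_augmentationSpan_top_le (f : G →* H) :
    (augmentationSpan k (⊤ : Subgroup G)).map (mapDomainAlgHom k k f).toLinearMap ≤
      augmentationSpan k (⊤ : Subgroup H) := by
  rw [augmentationSpan, map_span, span_le]
  rintro _ ⟨_, ⟨u, rfl⟩, rfl⟩
  exact subset_span ⟨⟨f u, Subgroup.mem_top _⟩, (mapDomainAlgHom_of_sub_one f u).symm⟩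

theorem augmentationSpan_le_map_subtype (K : Subgroup G) :
    augmentationSpan k K ≤
      (augmentationSpan k (⊤ : Subgroup K)).map (mapDomainAlgHom k k K.subtype).toLinearMap := by
  rw [augmentationSpan, span_le]
  rintro _ ⟨u, rfl⟩
  exact ⟨_, subset_span ⟨⟨u, Subgroup.mem_top u⟩, rfl⟩, mapDomainAlgHom_of_sub_one _ _⟩

theorem augmentationSpan_zpowers_le [Finite G] (z : G) :
    augmentationSpan k (Subgroup.zpowers z) ≤ ⊤ * span k {of k G z - 1} := by
  rw [augmentationSpan, span_le]
  rintro _ ⟨⟨u, hu⟩, rfl⟩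
  obtain ⟨j, rfl⟩ := (Submonoid.mem_powers_iff _ _).mp (mem_powers_iff_mem_zpowers.mpr hu)
  show of k G (z ^ j) - 1 ∈ _
  rw [map_pow, ← geom_sum_mul]
  exact mul_mem_mul mem_top (mem_span_singleton_self _)

theorem _root_.IsPGroup.isNilpotent_augmentationSpan_top {p : ℕ} [Fact p.Prime] [CharP k p]
    {Q : Type*} [Group Q] [Finite Q] (hQ : IsPGroup p Q) :
    IsNilpotent (augmentationSpan k (⊤ : Subgroup Q)) := by
  induction hcard : Nat.card Q using Nat.strong_induction_on generalizing Q with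
  | _ n ih =>
  rcases subsingleton_or_nontrivial Q with hQ1 | hQ1
  · refine ⟨1, ?_⟩
    rw [pow_one, zero_eq_bot, augmentationSpan, span_eq_bot]
    rintro _ ⟨u, rfl⟩
    show of k Q u - 1 = 0
    rw [Subsingleton.elim (u : Q) 1, map_one, sub_self]
  have := hQ.center_nontrivial
  obtain ⟨⟨z, hz⟩, hz1⟩ := exists_ne (1 : Subgroup.center Q)
  replace hz1 : z ≠ 1 := fun h => hz1 (Subtype.ext h)
  let K := Subgroup.zpowers z
  have hKcenter : K ≤ Subgroup.center Q := Subgroup.zpowers_le.mpr hz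
  have : K.Normal := ⟨fun u hu g => by
    rwa [Subgroup.mem_center_iff.mp (hKcenter hu) g, mul_inv_cancel_right]⟩
  have hcard_lt : Nat.card (Q ⧸ K) < n := by
    have hK1 : 1 < Nat.card K := K.one_lt_card_iff_ne_bot.mpr (Subgroup.zpowers_ne_bot.mpr hz1)
    rw [← hcard, K.card_eq_card_quotient_mul_card_subgroup]
    exact lt_mul_of_one_lt_right Nat.card_pos hK1
  obtain ⟨N, hN⟩ := ih _ hcard_lt (hQ.to_quotient K) rfl
  let c := of k Q z - 1
  have hc_nil : IsNilpotent c := by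
    obtain ⟨m, hm⟩ := hQ z
    refine ⟨p ^ m, ?_⟩
    rw [sub_pow_char_pow_of_commute _ _ (Commute.one_right _), one_pow, ← map_pow, hm, map_one,
      sub_self]
  obtain ⟨M, hM⟩ := isNilpotent_top_mul_span_singleton (R := k)
    (fun a => (commute_of_of_mem_center hz a).sub_left (Commute.one_left a)) hc_nil
  have hpowN : augmentationSpan k (⊤ : Subgroup Q) ^ N ≤ ⊤ * span k {c} :=
    calc augmentationSpan k (⊤ : Subgroup Q) ^ N
        ≤ LinearMap.ker (mapDomainAlgHom k k (QuotientGroup.mk' K)).toLinearMap := by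
          rw [LinearMap.le_ker_iff_map, Submodule.map_pow, ← le_bot_iff, ← zero_eq_bot, ← hN]
          exact pow_le_pow_left' (map_augmentationSpan_top_le _) N
      _ ≤ ⊤ * augmentationSpan k K := ker_mapDomainLinearMap_mk_le K
      _ ≤ ⊤ * (⊤ * span k {c}) := mul_le_mul_right (augmentationSpan_zpowers_le z) ⊤
      _ ≤ ⊤ * span k {c} := by rw [← mul_assoc]; exact mul_le_mul_left le_top _
  refine ⟨N * M, le_bot_iff.mp ?_⟩
  calc augmentationSpan k (⊤ : Subgroup Q) ^ (N * M)
      ≤ (⊤ * span k {c}) ^ M := by rw [pow_mul]; exact pow_le_pow_left' hpowN M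
    _ = ⊥ := hM

theorem _root_.IsPGroup.isNilpotent_augmentationSpan {p : ℕ} [Fact p.Prime] [CharP k p]
    {K : Subgroup G} [Finite K] (hK : IsPGroup p K) : IsNilpotent (augmentationSpan k K) := by
  obtain ⟨n, hn⟩ := hK.isNilpotent_augmentationSpan_top (k := k)
  refine ⟨n, le_bot_iff.mp ?_⟩
  calc augmentationSpan k K ^ n
      ≤ ((augmentationSpan k (⊤ : Subgroup K)).map
          (mapDomainAlgHom k k K.subtype).toLinearMap) ^ n :=
        pow_le_pow_left' (augmentationSpan_le_map_subtype K) n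
    _ = ⊥ := by rw [← Submodule.map_pow, hn, zero_eq_bot, Submodule.map_bot]

theorem _root_.IsPGroup.isNilpotent_ker_mapDomainAlgHom_mk {p : ℕ} [Fact p.Prime] [CharP k p]
    {P : Subgroup G} [P.Normal] [Finite P] (hP : IsPGroup p P) :
    IsNilpotent (LinearMap.ker (mapDomainAlgHom k k (QuotientGroup.mk' P)).toLinearMap) := by
  obtain ⟨n, hn⟩ := hP.isNilpotent_augmentationSpan (k := k)
  refine ⟨n, le_bot_iff.mp ?_⟩
  calc LinearMap.ker (mapDomainAlgHom k k (QuotientGroup.mk' P)).toLinearMap ^ n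
      ≤ (⊤ * augmentationSpan k P) ^ n := pow_le_pow_left' (ker_mapDomainLinearMap_mk_le P) n
    _ ≤ ⊤ * augmentationSpan k P ^ n :=
        mul_pow_le_mul_pow le_top le_top (augmentationSpan_mul_top_le P) n
    _ = ⊥ := by rw [hn, zero_eq_bot, mul_bot]

theorem _root_.IsPGroup.mapDomainAlgHom_mk_eq_algebraMap {p : ℕ} [Fact p.Prime] [CharP k p]
    [Fintype G] {P : Subgroup G} [P.Normal] [DecidablePred (· ∈ Subgroup.centralizer (P : Set G))]
    (hP : IsPGroup p P) (hcent : Subgroup.centralizer (P : Set G) ≤ P)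
    {e : MonoidAlgebra k G} (he : ∀ x, Commute e x) :
    mapDomainAlgHom k k (QuotientGroup.mk' P) e =
      algebraMap k _ (∑ g with g ∈ Subgroup.centralizer (P : Set G), e.coeff g) := by
  have mk_conj (u g : G) (hu : u ∈ P) : ((u * g * u⁻¹ : G) : G ⧸ P) = g := by
    simp [(QuotientGroup.eq_one_iff u).mpr hu]
  calc mapDomainAlgHom k k (QuotientGroup.mk' P) e
      = ∑ g, e.coeff g • of k (G ⧸ P) g := by
        conv_lhs => rw [← sum_coeff_single e, Finsupp.sum_fintype _ _ (by simp)]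
        simp [map_sum, mapDomain_single]
    _ = ∑ g with g ∈ Subgroup.centralizer (P : Set G), e.coeff g • of k (G ⧸ P) g :=
        hP.sum_eq_sum_centralizer k _ fun u hu g => by
          rw [coeff_conj_of_commute (he _), mk_conj u g hu]
    _ = ∑ g with g ∈ Subgroup.centralizer (P : Set G), e.coeff g • (1 : MonoidAlgebra k (G ⧸ P)) :=
        Finset.sum_congr rfl fun g hg => by
          rw [(QuotientGroup.eq_one_iff g).mpr (hcent (Finset.mem_filter.mp hg).2), map_one]
    _ = _ := by rw [← Finset.sum_smul, Algebra.algebraMap_eq_smul_one]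

end MonoidAlgebra

theorem one_block_of_normal_sylow_selfcentralizing_general {k : Type*} [Field k]
    (p : ℕ) [Fact p.Prime] [CharP k p]
    {G : Type*} [Group G] [Finite G] (P : Subgroup G) [P.Normal]
    (hP : IsPGroup p P)
    (hcent : Subgroup.centralizer (P : Set G) ≤ P)
    (e : MonoidAlgebra k G) (he : e * e = e)
    (hce : ∀ x : MonoidAlgebra k G, e * x = x * e) :
    e = 0 ∨ e = 1 := by
  classical
  cases nonempty_fintype G
  let π := mapDomainAlgHom k k (QuotientGroup.mk' P)
  have hnil : IsNilpotent (LinearMap.ker π.toLinearMap) := hP.isNilpotent_ker_mapDomainAlgHom_mk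
  set s := ∑ g with g ∈ Subgroup.centralizer (P : Set G), e.coeff g
  have hπe : π e = algebraMap k _ s := hP.mapDomainAlgHom_mk_eq_algebraMap hcent hce
  have hs : IsIdempotentElem s := (algebraMap k (MonoidAlgebra k (G ⧸ P))).injective <| by
    rw [map_mul, ← hπe, ← map_mul, he]
  rcases IsIdempotentElem.iff_eq_zero_or_one.mp hs with hs0 | hs1
  · refine Or.inl (IsIdempotentElem.eq_zero_of_mem_of_isNilpotent hnil he ?_)
    show π e = 0
    rw [hπe, hs0, map_zero]
  · refine Or.inr (sub_eq_zero.mp (IsIdempotentElem.eq_zero_of_mem_of_isNilpotent hnil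
      (IsIdempotentElem.one_sub he) ?_)).symm
    show π (1 - e) = 0
    rw [map_sub, hπe, hs1, map_one, map_one, sub_self]

/-- Let `G` be a finite group with a normal Sylow `p`-subgroup `P` such that
`C_G(P) ≤ P`. Then the group algebra `kG`, over an algebraically closed field `k`
of characteristic `p`, has only one block: its only central idempotents are `0`
and `1`. -/
theorem one_block_of_normal_sylow_selfcentralizing {k : Type*} [Field k] [IsAlgClosed k]
    (p : ℕ) [Fact p.Prime] [CharP k p]
    {G : Type*} [Group G] [Finite G] (P : Subgroup G) [P.Normal]
    (hP : IsPGroup p P) (hsyl : ¬ p ∣ P.index)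
    (hcent : Subgroup.centralizer (P : Set G) ≤ P)
    (e : MonoidAlgebra k G) (he : e * e = e)
    (hce : ∀ x : MonoidAlgebra k G, e * x = x * e) :
    e = 0 ∨ e = 1 :=
  one_block_of_normal_sylow_selfcentralizing_general p P hP hcent e he hce
end

section
/- Let G, H, K be finite groups, X ≤ G × H and Y ≤ H × K subgroups, Z ⊴ X and T ⊴ Y (or just Z ≤ X, T ≤ Y). Set D = k₂(X) ∩ k₁(Y), where k₂(X) = {h ∈ H : (1,h) ∈ X} and k₁(Y) = {h ∈ H : (h,1) ∈ Y}. Then the stabilizer in X*Y of the point ((u,v)Z, (w,r)T) in (X/Z) ×_D (Y/T) equals the composite subgroup (^{(u,v)}Z) * (^{(w,r)}T). -/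
/-!
Writing `(u, d * v) = (1, d) * (u, v)` and `(g * u, h * v) = (g, h) * (u, v)`, the condition on the
first coset says that `(g, d⁻¹ * h)` lies in `^{(u,v)}Z`; symmetrically the condition on the second
says that `(d⁻¹ * h, k)` lies in `^{(w,r)}T`. So `d⁻¹ * h` is a common middle coordinate. Conversely,
a common middle coordinate `h` works with `d = 1`, and then `(g, h) ∈ X`, `(h, k) ∈ Y` because the
conjugates `^{(u,v)}Z` and `^{(w,r)}T` stay inside `X` and `Y`.
-/

namespace Prod

variable {G H K : Type*} [Group G] [Group H] [Group K]

theorem inv_mk_mul_mk_eq_conj_snd (u g : G) (v d h : H) :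
    ((u, d * v) : G × H)⁻¹ * (g * u, h * v) = (u, v)⁻¹ * (g, d⁻¹ * h) * (u, v) :=
  Prod.ext (by simp [mul_assoc]) (by simp [mul_assoc])

theorem inv_mk_mul_mk_eq_conj_fst (w d h : H) (r k : K) :
    ((d * w, r) : H × K)⁻¹ * (h * w, k * r) = (w, r)⁻¹ * (d⁻¹ * h, k) * (w, r) :=
  Prod.ext (by simp [mul_assoc]) (by simp [mul_assoc])

end Prod

theorem Subgroup.mem_of_inv_mul_mul_mem {G : Type*} [Group G] {X Z : Subgroup G} (hZX : Z ≤ X)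
    {a x : G} (ha : a ∈ X) (hx : a⁻¹ * x * a ∈ Z) : x ∈ X :=
  (X.mul_mem_cancel_right ha).mp <| (X.mul_mem_cancel_left (X.inv_mem ha)).mp (mul_assoc a⁻¹ x a ▸ hZX hx)

theorem stabilizer_amalgamated_cosets_general {G H K : Type*} [Group G] [Group H] [Group K]
    (X Z : Subgroup (G × H)) (Y T : Subgroup (H × K))
    (hZX : Z ≤ X) (hTY : T ≤ Y)
    (u : G) (v : H) (w : H) (r : K) (huv : (u, v) ∈ X) (hwr : (w, r) ∈ Y)
    (g : G) (k : K) :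
    (∃ h : H, (g, h) ∈ X ∧ (h, k) ∈ Y ∧
        ∃ d : H, ((1 : G), d) ∈ X ∧ (d, (1 : K)) ∈ Y ∧
          ((u, d * v) : G × H)⁻¹ * (g * u, h * v) ∈ Z ∧
          ((d * w, r) : H × K)⁻¹ * (h * w, k * r) ∈ T) ↔
      ∃ h : H,
        (g, h) ∈ Z.map (MulAut.conj ((u, v) : G × H)).toMonoidHom ∧
        (h, k) ∈ T.map (MulAut.conj ((w, r) : H × K)).toMonoidHom := by
  simp only [Subgroup.mem_map_equiv, MulAut.conj_symm_apply, Prod.inv_mk_mul_mk_eq_conj_snd,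
    Prod.inv_mk_mul_mk_eq_conj_fst]
  constructor
  · rintro ⟨h, -, -, d, -, -, hZ, hT⟩
    exact ⟨d⁻¹ * h, hZ, hT⟩
  · rintro ⟨h, hZ, hT⟩
    refine ⟨h, Subgroup.mem_of_inv_mul_mul_mem hZX huv hZ,
      Subgroup.mem_of_inv_mul_mul_mem hTY hwr hT, 1, X.one_mem, Y.one_mem, ?_, ?_⟩
    · simpa only [inv_one, one_mul] using hZ
    · simpa only [inv_one, one_mul] using hT

/-- Let `G, H, K` be finite groups, `Z ≤ X ≤ G × H` and `T ≤ Y ≤ H × K` subgroups,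
and `D = k₂(X) ∩ k₁(Y)` (where `d ∈ D` iff `(1,d) ∈ X` and `(d,1) ∈ Y`). The group
`X*Y = {(g,k) : ∃ h, (g,h) ∈ X, (h,k) ∈ Y}` acts on `(X/Z) ×_D (Y/T)` (pairs of
cosets modulo the middle `D`-identification). The stabilizer in `X*Y` of the point
`((u,v)Z, (w,r)T)` equals the composite subgroup `(^{(u,v)}Z) * (^{(w,r)}T)`:
an element `(g,k)` of `X*Y` fixes the point (i.e. some lift `(g,h) ∈ X`,
`(h,k) ∈ Y` sends the pair of cosets to a `D`-translate of itself) if and only if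
`(g,k)` belongs to the composite of the conjugates `^{(u,v)}Z` and `^{(w,r)}T`. -/
theorem stabilizer_amalgamated_cosets {G H K : Type*} [Group G] [Group H] [Group K]
    [Finite G] [Finite H] [Finite K]
    (X Z : Subgroup (G × H)) (Y T : Subgroup (H × K))
    (hZX : Z ≤ X) (hTY : T ≤ Y)
    (u : G) (v : H) (w : H) (r : K) (huv : (u, v) ∈ X) (hwr : (w, r) ∈ Y)
    (g : G) (k : K) :
    (∃ h : H, (g, h) ∈ X ∧ (h, k) ∈ Y ∧
        ∃ d : H, ((1 : G), d) ∈ X ∧ (d, (1 : K)) ∈ Y ∧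
          ((u, d * v) : G × H)⁻¹ * (g * u, h * v) ∈ Z ∧
          ((d * w, r) : H × K)⁻¹ * (h * w, k * r) ∈ T) ↔
      ∃ h : H,
        (g, h) ∈ Z.map (MulAut.conj ((u, v) : G × H)).toMonoidHom ∧
        (h, k) ∈ T.map (MulAut.conj ((w, r) : H × K)).toMonoidHom :=
  stabilizer_amalgamated_cosets_general X Z Y T hZX hTY u v w r huv hwr g k
end
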